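/- Let h : ℂ → ℂ be an antiholomorphic function (i.e., conj(h) is entire holomorphic) with h(w) ≠ 0 for every w ∈ ℂ. Then there exists no C² function ã : ℂ → ℝ satisfying ã_{w̄w} = 4|h|² e^{2ã} on all of ℂ (equivalently, Δã = 16|h|² e^{2ã} on ℂ). -/

import Mathlib

open Complex
open scoped ComplexOrder

noncomputable section

/-- Wirtinger derivative `F_w = (1/2)(∂F/∂x − i ∂F/∂y)`. -/
def wDeriv (F : ℂ → ℂ) (w : ℂ) : ℂ :=
  (fderiv ℝ F w 1 - Complex.I * fderiv ℝ F w Complex.I) / 2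

/-- Wirtinger derivative `F_w̄ = (1/2)(∂F/∂x + i ∂F/∂y)`. -/
def wBarDeriv (F : ℂ → ℂ) (w : ℂ) : ℂ :=
  (fderiv ℝ F w 1 + Complex.I * fderiv ℝ F w Complex.I) / 2

/-- The mixed second Wirtinger derivative `F_{w̄ w}`. -/
def wBarWDeriv (F : ℂ → ℂ) (w : ℂ) : ℂ := wDeriv (wBarDeriv F) w

/-- `u_z`, the Wirtinger derivative in the first variable. -/
def pzDeriv (u : ℂ × ℂ → ℂ) (p : ℂ × ℂ) : ℂ :=
  (fderiv ℝ u p (1, 0) - Complex.I * fderiv ℝ u p (Complex.I, 0)) / 2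

/-- `u_z̄`, the conjugate Wirtinger derivative in the first variable. -/
def pzBarDeriv (u : ℂ × ℂ → ℂ) (p : ℂ × ℂ) : ℂ :=
  (fderiv ℝ u p (1, 0) + Complex.I * fderiv ℝ u p (Complex.I, 0)) / 2

/-- `u_w`, the Wirtinger derivative in the second variable. -/
def pwDeriv (u : ℂ × ℂ → ℂ) (p : ℂ × ℂ) : ℂ :=
  (fderiv ℝ u p (0, 1) - Complex.I * fderiv ℝ u p (0, Complex.I)) / 2

/-- `u_w̄`, the conjugate Wirtinger derivative in the second variable. -/
def pwBarDeriv (u : ℂ × ℂ → ℂ) (p : ℂ × ℂ) : ℂ :=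
  (fderiv ℝ u p (0, 1) + Complex.I * fderiv ℝ u p (0, Complex.I)) / 2

/-- The complex Hessian `[[u_{z z̄}, u_{z w̄}], [u_{w z̄}, u_{w w̄}]]` of a real-valued
function on `ℂ × ℂ`. -/
def complexHessian (u : ℂ × ℂ → ℝ) (p : ℂ × ℂ) : Matrix (Fin 2) (Fin 2) ℂ :=
  !![pzDeriv (pzBarDeriv fun q => (u q : ℂ)) p, pzDeriv (pwBarDeriv fun q => (u q : ℂ)) p;
     pwDeriv (pzBarDeriv fun q => (u q : ℂ)) p, pwDeriv (pwBarDeriv fun q => (u q : ℂ)) p]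

/-- `det (∂ ∂̄ u) = u_{z z̄} u_{w w̄} − u_{z w̄} u_{w z̄}`. -/
def MAdet (u : ℂ × ℂ → ℝ) (p : ℂ × ℂ) : ℂ := (complexHessian u p).det

/-- `u` is strictly plurisubharmonic at `p` iff its complex Hessian is positive definite. -/
def StrictPSHAt (u : ℂ × ℂ → ℝ) (p : ℂ × ℂ) : Prop := (complexHessian u p).PosDef

/-- The special quadric form (smae):
`u(z,w) = a(w)|z|² + b(w)z² + conj(b(w)z²) + c(w)z + conj(c(w)z) + d(w)`. -/
def smae (a d : ℂ → ℝ) (b c : ℂ → ℂ) : ℂ × ℂ → ℝ := fun p =>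
  a p.2 * Complex.normSq p.1 + (b p.2 * p.1 ^ 2 + (starRingEnd ℂ) (b p.2 * p.1 ^ 2)
    + c p.2 * p.1 + (starRingEnd ℂ) (c p.2 * p.1)).re + d p.2

/-- The system (ma0) on a set `D ⊆ ℂ`:
`a a_{w̄w} = |a_w|² + 4|b_w̄|²`, `a b_{w̄w} = 2 a_w b_w̄`,
`a c_{w̄w} = a_w c_w̄ + 2 b_w̄ conj(c_w)`, `a d_{w̄w} = |c_w̄|² + 1`. -/
def ma0sys (a d : ℂ → ℝ) (b c : ℂ → ℂ) (D : Set ℂ) : Prop :=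
  ∀ w ∈ D,
    (a w : ℂ) * wBarWDeriv (fun v => (a v : ℂ)) w
        = (Complex.normSq (wDeriv (fun v => (a v : ℂ)) w) : ℂ)
          + 4 * (Complex.normSq (wBarDeriv b w) : ℂ) ∧
    (a w : ℂ) * wBarWDeriv b w = 2 * wDeriv (fun v => (a v : ℂ)) w * wBarDeriv b w ∧
    (a w : ℂ) * wBarWDeriv c w
        = wDeriv (fun v => (a v : ℂ)) w * wBarDeriv c w
          + 2 * wBarDeriv b w * (starRingEnd ℂ) (wDeriv c w) ∧
    (a w : ℂ) * wBarWDeriv (fun v => (d v : ℂ)) w = (Complex.normSq (wBarDeriv c w) : ℂ) + 1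

open Filter Topology

/-- `Psi c u = (c * u).re` as a continuous bilinear map. -/
def Psi : ℂ →L[ℝ] ℂ →L[ℝ] ℝ :=
  (ContinuousLinearMap.compL ℝ ℂ ℂ ℝ Complex.reCLM).comp (ContinuousLinearMap.mul ℝ ℂ)

@[simp] lemma Psi_apply (c u : ℂ) : Psi c u = (c * u).re := rfl

lemma hasFDerivAt_normSq (y : ℂ) :
    HasFDerivAt Complex.normSq ((2:ℝ) • Psi ((starRingEnd ℂ) y)) y := by
  have h : HasFDerivAt (fun z : ℂ => z.re * z.re + z.im * z.im)
      ((y.re • Complex.reCLM + y.re • Complex.reCLM) +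
        (y.im • Complex.imCLM + y.im • Complex.imCLM)) y :=
    ((Complex.reCLM.hasFDerivAt.mul Complex.reCLM.hasFDerivAt).add
      (Complex.imCLM.hasFDerivAt.mul Complex.imCLM.hasFDerivAt))
  rw [show (fun z : ℂ => z.re * z.re + z.im * z.im) = Complex.normSq from
    funext fun z => (Complex.normSq_apply z).symm] at h
  convert h using 1
  ext u
  simp [Complex.mul_re]
  ring

lemma lemA (f : ℂ → ℝ) {D : ℂ → ℂ →L[ℝ] ℝ} {H : ℂ →L[ℝ] ℂ →L[ℝ] ℝ} {p : ℂ}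
    (hD : ∀ᶠ y in 𝓝 p, HasFDerivAt f (D y) y) (hH : HasFDerivAt D H p) :
    wBarWDeriv (fun v => (f v : ℂ)) p = (((H 1 1 + H Complex.I Complex.I) / 4 : ℝ) : ℂ) := by
  have hbar : ∀ᶠ y in 𝓝 p, wBarDeriv (fun v => (f v : ℂ)) y
      = (((D y 1 : ℝ) : ℂ) + Complex.I * ((D y Complex.I : ℝ) : ℂ)) / 2 := by
    filter_upwards [hD] with y hy
    have h1 : HasFDerivAt (fun v => (f v : ℂ)) (Complex.ofRealCLM.comp (D y)) y :=
      Complex.ofRealCLM.hasFDerivAt.comp y hy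
    rw [wBarDeriv, h1.fderiv]
    simp
  -- derivative of the barred derivative
  have h1 : HasFDerivAt (fun y => D y (1:ℂ)) ((D p).comp (0 : ℂ →L[ℝ] ℂ) + H.flip 1) p :=
    hH.clm_apply (hasFDerivAt_const _ _)
  have h2 : HasFDerivAt (fun y => D y (Complex.I)) ((D p).comp (0 : ℂ →L[ℝ] ℂ) + H.flip Complex.I) p :=
    hH.clm_apply (hasFDerivAt_const _ _)
  have h3 : HasFDerivAt (fun y => (((D y 1 : ℝ) : ℂ) + Complex.I * ((D y Complex.I : ℝ) : ℂ)) / 2)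
      ((2:ℂ)⁻¹ • (Complex.ofRealCLM.comp ((D p).comp (0 : ℂ →L[ℝ] ℂ) + H.flip 1)
        + Complex.I • Complex.ofRealCLM.comp ((D p).comp (0 : ℂ →L[ℝ] ℂ) + H.flip Complex.I)))
      p := by
    have e1 := Complex.ofRealCLM.hasFDerivAt.comp p h1
    have e2 := (Complex.ofRealCLM.hasFDerivAt.comp p h2).const_smul Complex.I
    have h' := (e1.add e2).const_smul ((2:ℂ)⁻¹)
    apply h'.congr_of_eventuallyEq
    filter_upwards with y
    simp [smul_eq_mul]
    ring
  have h4 : HasFDerivAt (wBarDeriv (fun v => (f v : ℂ)))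
      ((2:ℂ)⁻¹ • (Complex.ofRealCLM.comp ((D p).comp (0 : ℂ →L[ℝ] ℂ) + H.flip 1)
        + Complex.I • Complex.ofRealCLM.comp ((D p).comp (0 : ℂ →L[ℝ] ℂ) + H.flip Complex.I))) p :=
    h3.congr_of_eventuallyEq hbar
  have hsym : H 1 Complex.I = H Complex.I 1 :=
    second_derivative_symmetric_of_eventually hD hH 1 Complex.I
  rw [wBarWDeriv, wDeriv, h4.fderiv]
  simp only [ContinuousLinearMap.add_apply, ContinuousLinearMap.coe_comp', Function.comp_apply,
    ContinuousLinearMap.zero_apply, ContinuousLinearMap.smul_apply, ContinuousLinearMap.flip_apply,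
    ContinuousLinearMap.map_zero, Complex.ofRealCLM_apply, smul_eq_mul, zero_add]
  rw [hsym]
  push_cast
  have hI : (Complex.I : ℂ) ^ 2 = -1 := Complex.I_sq
  linear_combination (-(H Complex.I Complex.I : ℝ) / 4 : ℂ) * hI

/-- `f` has (4×) quarter-Laplacian data at `p`. -/
def HasLapAt (f : ℂ → ℝ) (L : ℝ) (p : ℂ) : Prop :=
  ∃ (D : ℂ → ℂ →L[ℝ] ℝ) (H : ℂ →L[ℝ] ℂ →L[ℝ] ℝ),
    (∀ᶠ y in 𝓝 p, HasFDerivAt f (D y) y) ∧ HasFDerivAt D H p ∧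
      H 1 1 + H Complex.I Complex.I = L

lemma HasLapAt.wBarW {f : ℂ → ℝ} {L : ℝ} {p : ℂ} (h : HasLapAt f L p) :
    wBarWDeriv (fun v => (f v : ℂ)) p = ((L / 4 : ℝ) : ℂ) := by
  obtain ⟨D, H, hD, hH, hL⟩ := h
  rw [lemA f hD hH, hL]

lemma HasLapAt.add {f g : ℂ → ℝ} {L M : ℝ} {p : ℂ}
    (hf : HasLapAt f L p) (hg : HasLapAt g M p) : HasLapAt (fun y => f y + g y) (L + M) p := by
  obtain ⟨D₁, H₁, hD₁, hH₁, hL₁⟩ := hf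
  obtain ⟨D₂, H₂, hD₂, hH₂, hL₂⟩ := hg
  refine ⟨fun y => D₁ y + D₂ y, H₁ + H₂, ?_, hH₁.add hH₂, ?_⟩
  · filter_upwards [hD₁, hD₂] with y h1 h2 using h1.add h2
  · simp only [ContinuousLinearMap.add_apply]
    rw [← hL₁, ← hL₂]; ring

lemma HasLapAt.const_mul {f : ℂ → ℝ} {L : ℝ} {p : ℂ} (c : ℝ)
    (hf : HasLapAt f L p) : HasLapAt (fun y => c * f y) (c * L) p := by
  obtain ⟨D, H, hD, hH, hL⟩ := hf
  refine ⟨fun y => c • D y, c • H, ?_, hH.const_smul c, ?_⟩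
  · filter_upwards [hD] with y h1 using h1.const_smul c
  · simp only [ContinuousLinearMap.smul_apply, smul_eq_mul]
    rw [← hL]; ring

lemma hasLapAt_const (c : ℝ) (p : ℂ) : HasLapAt (fun _ => c) 0 p :=
  ⟨fun _ => 0, 0, Filter.Eventually.of_forall fun y => hasFDerivAt_const c y,
    hasFDerivAt_const 0 p, by simp⟩

lemma HasLapAt.add_const {f : ℂ → ℝ} {L : ℝ} {p : ℂ} (c : ℝ)
    (hf : HasLapAt f L p) : HasLapAt (fun y => f y + c) L p := by
  simpa using hf.add (hasLapAt_const c p)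

/-- One-dimensional second derivative test at a local max. -/
lemma second_deriv_nonpos_of_isLocalMax {g g' : ℝ → ℝ} {c : ℝ}
    (hg : ∀ᶠ t in 𝓝 (0:ℝ), HasDerivAt g (g' t) t)
    (hg' : HasDerivAt g' c 0) (hmax : IsLocalMax g 0) : c ≤ 0 := by
  by_contra hc
  push_neg at hc
  have h0 : g' 0 = 0 := hmax.hasDerivAt_eq_zero hg.self_of_nhds
  -- g' is positive on a small right interval
  have hslope : Filter.Tendsto (fun t => g' t / t) (𝓝[≠] (0:ℝ)) (𝓝 c) := by
    have h := hasDerivAt_iff_tendsto_slope.1 hg'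
    refine Filter.Tendsto.congr' ?_ h
    filter_upwards [self_mem_nhdsWithin] with t ht
    simp [slope_def_field, h0]
  have hpos : ∀ᶠ t in 𝓝[≠] (0:ℝ), 0 < g' t / t :=
    hslope.eventually (eventually_gt_nhds hc)
  rw [eventually_nhdsWithin_iff] at hpos
  obtain ⟨δ₁, hδ₁, h₁⟩ := Metric.eventually_nhds_iff.mp hpos
  obtain ⟨δ₂, hδ₂, h₂⟩ := Metric.eventually_nhds_iff.mp hg
  obtain ⟨δ₃, hδ₃, h₃⟩ := Metric.eventually_nhds_iff.mp hmax
  set δ := min δ₁ (min δ₂ δ₃) with hδdef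
  have hδ : 0 < δ := lt_min hδ₁ (lt_min hδ₂ hδ₃)
  have hmem : ∀ t ∈ Set.Icc (0:ℝ) (δ/2), dist t 0 < min δ₂ δ₃ := by
    intro t ht
    rw [Real.dist_eq, sub_zero, _root_.abs_of_nonneg ht.1]
    calc t ≤ δ/2 := ht.2
    _ < δ := by linarith
    _ ≤ min δ₂ δ₃ := min_le_right _ _
  have hcont : ContinuousOn g (Set.Icc 0 (δ/2)) := by
    intro t ht
    exact ((h₂ (lt_of_lt_of_le (hmem t ht) (min_le_left _ _))).continuousAt).continuousWithinAt
  have hderiv : ∀ t ∈ Set.Ioo (0:ℝ) (δ/2), 0 < deriv g t := by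
    intro t ht
    have htd : dist t 0 < min δ₂ δ₃ := hmem t ⟨ht.1.le, ht.2.le⟩
    have hd : HasDerivAt g (g' t) t := h₂ (lt_of_lt_of_le htd (min_le_left _ _))
    rw [hd.deriv]
    have : 0 < g' t / t := by
      apply h₁
      · rw [Real.dist_eq, sub_zero, _root_.abs_of_pos ht.1]
        calc t < δ/2 := ht.2
        _ < δ := by linarith
        _ ≤ δ₁ := min_le_left _ _
      · simpa using ht.1.ne'
    have := mul_pos this ht.1
    rwa [div_mul_cancel₀] at this
    exact ht.1.ne'
  have hmono : StrictMonoOn g (Set.Icc 0 (δ/2)) :=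
    strictMonoOn_of_deriv_pos (convex_Icc _ _) hcont (by rwa [interior_Icc])
  have hlt : g 0 < g (δ/2) :=
    hmono (Set.left_mem_Icc.2 (by linarith)) (Set.right_mem_Icc.2 (by linarith)) (by linarith)
  have : g (δ/2) ≤ g 0 := by
    apply h₃
    rw [Real.dist_eq, sub_zero, _root_.abs_of_pos (by linarith : (0:ℝ) < δ/2)]
    calc δ/2 < δ := by linarith
    _ ≤ δ₃ := le_trans (min_le_right _ _) (min_le_right _ _)
  linarith

lemma HasLapAt.nonpos_of_isLocalMax {f : ℂ → ℝ} {L : ℝ} {p : ℂ}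
    (h : HasLapAt f L p) (hmax : IsLocalMax f p) : L ≤ 0 := by
  obtain ⟨D, H, hD, hH, hL⟩ := h
  have key : ∀ e : ℂ, H e e ≤ 0 := by
    intro e
    set l : ℝ → ℂ := fun t => p + t • e with hl
    have hl0 : l 0 = p := by simp [hl]
    have hlt : ∀ t : ℝ, HasDerivAt l e t := by
      intro t
      simpa [hl] using ((hasDerivAt_id t).smul_const e).const_add p
    have hlcont : Filter.Tendsto l (𝓝 0) (𝓝 p) := by
      rw [← hl0]; exact (hlt 0).continuousAt
    have hg : ∀ᶠ t in 𝓝 (0:ℝ), HasDerivAt (fun s => f (l s)) (D (l t) e) t := by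
      filter_upwards [hlcont.eventually hD] with t ht
      exact (ht.comp_hasDerivAt t (hlt t) :)
    have hg' : HasDerivAt (fun t => D (l t) e) (H e e) 0 := by
      have hDl : HasDerivAt (fun t => D (l t)) (H e) 0 := by
        have hH' : HasFDerivAt D H (l 0) := by rw [hl0]; exact hH
        exact (hH'.comp_hasDerivAt 0 (hlt 0) :)
      have := hDl.clm_apply (hasDerivAt_const 0 e)
      simpa using this
    have hgmax : IsLocalMax (fun s => f (l s)) 0 := by
      have : ∀ᶠ t in 𝓝 (0:ℝ), f (l t) ≤ f p := hlcont.eventually hmax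
      simpa [IsLocalMax, IsMaxFilter, hl0] using this
    exact second_deriv_nonpos_of_isLocalMax hg hg' hgmax
  have := add_nonpos (key 1) (key Complex.I)
  linarith [hL]

lemma hasLapAt_log_normSq {g : ℂ → ℂ} (hg : Differentiable ℂ g) (hne : ∀ w, g w ≠ 0) (p : ℂ) :
    HasLapAt (fun w => Real.log (Complex.normSq (g w))) 0 p := by
  have hdg : Differentiable ℂ (deriv g) := by
    have h2 : ContDiff ℂ 2 g := hg.contDiff
    have := (contDiff_succ_iff_deriv (n := 1)).mp (by exact_mod_cast h2)
    exact this.2.2.differentiable (by norm_num)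
  set ψ : ℂ → ℂ := fun y => deriv g y / g y with hψdef
  have hψ : ∀ y, DifferentiableAt ℂ ψ y := fun y =>
    (hdg y).div (hg y) (hne y)
  refine ⟨fun y => (2:ℝ) • Psi (ψ y), ((2:ℝ) • Psi).comp
    (((1 : ℂ →L[ℂ] ℂ).smulRight (deriv ψ p)).restrictScalars ℝ), ?_, ?_, ?_⟩
  · apply Filter.Eventually.of_forall
    intro y
    have hgF : HasFDerivAt g (((1 : ℂ →L[ℂ] ℂ).smulRight (deriv g y)).restrictScalars ℝ) y :=
      ((hg y).hasDerivAt.hasFDerivAt).restrictScalars ℝ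
    have hn := hasFDerivAt_normSq (g y)
    have hcomp := hn.comp y hgF
    have hlog := (Real.hasDerivAt_log ((Complex.normSq_pos.mpr (hne y)).ne')).comp_hasFDerivAt y hcomp
    refine hlog.congr_fderiv ?_
    ext u
    have hz : g y ≠ 0 := hne y
    have key : (starRingEnd ℂ) (g y) * (u * deriv g y)
        = ((Complex.normSq (g y) : ℝ) : ℂ) * (ψ y * u) := by
      rw [← Complex.mul_conj]
      simp only [hψdef]
      field_simp
    simp only [ContinuousLinearMap.smul_apply, Psi_apply, ContinuousLinearMap.coe_comp',
      Function.comp_apply, ContinuousLinearMap.coe_restrictScalars',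
      ContinuousLinearMap.smulRight_apply, ContinuousLinearMap.one_apply, smul_eq_mul]
    rw [key, Complex.re_ofReal_mul]
    have hns : Complex.normSq (g y) ≠ 0 := (Complex.normSq_pos.mpr hz).ne'
    field_simp
  · have hψF : HasFDerivAt ψ (((1 : ℂ →L[ℂ] ℂ).smulRight (deriv ψ p)).restrictScalars ℝ) p :=
      ((hψ p).hasDerivAt.hasFDerivAt).restrictScalars ℝ
    have := ((2:ℝ) • Psi).hasFDerivAt.comp p hψF
    exact this
  · set dψ := deriv ψ p
    simp only [ContinuousLinearMap.coe_comp', Function.comp_apply,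
      ContinuousLinearMap.coe_restrictScalars', ContinuousLinearMap.smulRight_apply,
      ContinuousLinearMap.one_apply, ContinuousLinearMap.smul_apply, Psi_apply, smul_eq_mul,
      one_smul]
    have h2 : Complex.I * dψ * Complex.I = -dψ := by
      rw [show Complex.I * dψ * Complex.I = dψ * (Complex.I * Complex.I) by ring,
        Complex.I_mul_I]
      ring
    rw [h2]
    simp [Complex.neg_re]

lemma hasLapAt_log_ball (R : ℝ) (p : ℂ) (hp : Complex.normSq p < R ^ 2) :
    HasLapAt (fun y => Real.log (R ^ 2 - Complex.normSq y))
      (-4 / (R ^ 2 - Complex.normSq p) - 4 * Complex.normSq p / (R ^ 2 - Complex.normSq p) ^ 2)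
      p := by
  set s : ℂ → ℝ := fun y => R ^ 2 - Complex.normSq y with hsdef
  have hsp : 0 < s p := by simp [hsdef]; linarith
  have hscont : Continuous s := by
    have : Continuous Complex.normSq := Complex.continuous_normSq
    fun_prop
  -- the first-derivative family
  set D : ℂ → ℂ →L[ℝ] ℝ := fun y => (-2 * (s y)⁻¹) • Psi ((starRingEnd ℂ) y) with hDdef
  have hDs : ∀ y, s y ≠ 0 → HasFDerivAt (fun y => Real.log (s y)) (D y) y := by
    intro y hy
    have hs' : HasFDerivAt s (-((2:ℝ) • Psi ((starRingEnd ℂ) y))) y := by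
      have := (hasFDerivAt_const (R ^ 2) y).sub (hasFDerivAt_normSq y); rw [zero_sub] at this; exact this
    have hlog := (Real.hasDerivAt_log hy).comp_hasFDerivAt y hs'
    refine hlog.congr_fderiv ?_
    ext u
    simp [hDdef]
    ring
  have hDev : ∀ᶠ y in 𝓝 p, HasFDerivAt (fun y => Real.log (s y)) (D y) y := by
    have : ∀ᶠ y in 𝓝 p, 0 < s y := (hscont.continuousAt).eventually (eventually_gt_nhds hsp)
    filter_upwards [this] with y hy using hDs y hy.ne'
  -- derivative of D
  have hc : HasFDerivAt (fun y => -2 * (s y)⁻¹)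
      ((2 * (s p)⁻¹ ^ 2) • (-((2:ℝ) • Psi ((starRingEnd ℂ) p)))) p := by
    have hs' : HasFDerivAt s (-((2:ℝ) • Psi ((starRingEnd ℂ) p))) p := by
      have := (hasFDerivAt_const (R ^ 2) p).sub (hasFDerivAt_normSq p); rw [zero_sub] at this; exact this
    have hinv : HasDerivAt (fun t : ℝ => -2 * t⁻¹) (-2 * (-((s p) ^ 2)⁻¹)) (s p) :=
      (hasDerivAt_inv hsp.ne').const_mul (-2)
    have := hinv.comp_hasFDerivAt p hs'
    refine this.congr_fderiv ?_
    rw [show -2 * -((s p) ^ 2)⁻¹ = 2 * (s p)⁻¹ ^ 2 by field_simp]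
  have hN : HasFDerivAt (fun y => Psi ((starRingEnd ℂ) y))
      (Psi.comp (Complex.conjCLE.toContinuousLinearMap)) p := by
    have := (Psi.comp (Complex.conjCLE.toContinuousLinearMap)).hasFDerivAt (x := p)
    exact this
  have hH := hc.smul hN
  refine ⟨D, _, hDev, hH, ?_⟩
  have e1 : ((starRingEnd ℂ) (1:ℂ) * 1).re = 1 := by simp
  have e2 : ((starRingEnd ℂ) Complex.I * Complex.I).re = 1 := by
    simp [Complex.mul_re]
  simp only [ContinuousLinearMap.add_apply, ContinuousLinearMap.smul_apply,
    ContinuousLinearMap.coe_comp', Function.comp_apply,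
    ContinuousLinearEquiv.coe_coe, ContinuousLinearMap.smulRight_apply,
    ContinuousLinearMap.coe_restrictScalars', Psi_apply, smul_eq_mul,
    ContinuousLinearMap.neg_apply, Complex.conjCLE_apply]
  rw [e1, e2]
  have e3 : ((starRingEnd ℂ) p * 1).re = p.re := by simp
  have e4 : ((starRingEnd ℂ) p * Complex.I).re = p.im := by simp [Complex.mul_re]
  rw [e3, e4]
  have hs0 : (0:ℝ) < R ^ 2 - (p.re * p.re + p.im * p.im) := by
    have := hsp
    simpa [hsdef, Complex.normSq_apply] using this
  simp only [hsdef, Complex.normSq_apply]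
  field_simp
  ring

/-- if `h` is a nowhere-vanishing antiholomorphic function on `ℂ`, then
there is no entire `C²` real function `ã` with `ã_{w̄w} = 4|h|² e^{2ã}` on `ℂ`. -/
theorem stmt8 (h : ℂ → ℂ)
    (hanti : Differentiable ℂ fun w => (starRingEnd ℂ) (h w))
    (hne : ∀ w : ℂ, h w ≠ 0) :
    ¬ ∃ ta : ℂ → ℝ, ContDiff ℝ 2 ta ∧
        ∀ w : ℂ, wBarWDeriv (fun v => (ta v : ℂ)) w
          = ((4 * Complex.normSq (h w) * Real.exp (2 * ta w) : ℝ) : ℂ) := by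
  rintro ⟨ta, hta, heq⟩
  set g : ℂ → ℂ := fun w => (starRingEnd ℂ) (h w) with hgdef
  have hg : Differentiable ℂ g := hanti
  have hgne : ∀ w, g w ≠ 0 := fun w => by simp [hgdef, hne w]
  have hnsq_eq : ∀ w, Complex.normSq (g w) = Complex.normSq (h w) := fun w =>
    Complex.normSq_conj (h w)
  -- the Laplacian of ta
  have hta_lap : ∀ p : ℂ, HasLapAt ta (16 * Complex.normSq (h p) * Real.exp (2 * ta p)) p := by
    intro p
    have hd : Differentiable ℝ ta := hta.differentiable (by norm_num)
    have hd1 : Differentiable ℝ (fderiv ℝ ta) :=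
      (hta.fderiv_right (m := 1) (by norm_num)).differentiable (by norm_num)
    have h0 : HasLapAt ta (fderiv ℝ (fderiv ℝ ta) p 1 1
        + fderiv ℝ (fderiv ℝ ta) p Complex.I Complex.I) p :=
      ⟨fderiv ℝ ta, fderiv ℝ (fderiv ℝ ta) p,
        Filter.Eventually.of_forall (fun y => (hd y).hasFDerivAt), (hd1 p).hasFDerivAt, rfl⟩
    have h1 := h0.wBarW
    rw [heq p] at h1
    have h2 : (4 * Complex.normSq (h p) * Real.exp (2 * ta p) : ℝ)
        = (fderiv ℝ (fderiv ℝ ta) p 1 1 + fderiv ℝ (fderiv ℝ ta) p Complex.I Complex.I) / 4 :=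
      Complex.ofReal_injective h1
    obtain ⟨D, H, hD, hH, hL⟩ := h0
    exact ⟨D, H, hD, hH, by rw [hL]; linarith⟩
  -- continuity of the "v" part
  set v : ℂ → ℝ := fun w => 2 * ta w + Real.log (Complex.normSq (g w)) with hvdef
  have hvcont : Continuous v := by
    apply Continuous.add
    · exact continuous_const.mul hta.continuous
    · apply continuous_iff_continuousAt.mpr
      intro w
      have h1 : ContinuousAt (fun w => Complex.normSq (g w)) w :=
        (Complex.continuous_normSq.comp hg.continuous).continuousAt
      exact ContinuousAt.comp (g := Real.log)
        (Real.continuousAt_log (Complex.normSq_pos.mpr (hgne w)).ne') h1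
  -- the key claim: for every R > 0, W 0 ≤ 0
  have key : ∀ R : ℝ, 0 < R →
      v 0 + Real.log (R ^ 2) + Real.log 4 ≤ 0 := by
    intro R hR
    set K : ℝ := Real.log 4 - Real.log (R ^ 2) with hKdef
    set W : ℂ → ℝ := fun y => (2 * ta y + Real.log (Complex.normSq (g y)))
      + (2 * Real.log (R ^ 2 - Complex.normSq y) + K) with hWdef
    have hR2 : (0:ℝ) < R ^ 2 := by positivity
    -- Laplacian data for W
    have hW_lap : ∀ p : ℂ, Complex.normSq p < R ^ 2 → HasLapAt W
        ((2 * (16 * Complex.normSq (h p) * Real.exp (2 * ta p)) + 0)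
          + 2 * (-4 / (R ^ 2 - Complex.normSq p)
              - 4 * Complex.normSq p / (R ^ 2 - Complex.normSq p) ^ 2)) p := by
      intro p hp
      exact (((hta_lap p).const_mul 2).add (hasLapAt_log_normSq hg hgne p)).add
        (((hasLapAt_log_ball R p hp).const_mul 2).add_const K)
    -- bound for v on the closed ball
    obtain ⟨q, hqmem, hqmax⟩ := (isCompact_closedBall (0:ℂ) R).exists_isMaxOn
      ⟨0, Metric.mem_closedBall_self hR.le⟩ hvcont.continuousOn
    set C : ℝ := v q with hCdef
    have hC : ∀ w : ℂ, Complex.normSq w < R ^ 2 → v w ≤ C := by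
      intro w hw
      apply hqmax
      rw [Metric.mem_closedBall, dist_zero_right]
      nlinarith [Complex.normSq_eq_norm_sq w, norm_nonneg w]
    -- radius choice
    set s₁ : ℝ := Real.exp ((v 0 - C + 2 * Real.log (R ^ 2)) / 2) with hs₁def
    have hs₁pos : 0 < s₁ := Real.exp_pos _
    set s₀ : ℝ := min s₁ (R ^ 2) with hs₀def
    have hs₀pos : 0 < s₀ := lt_min hs₁pos hR2
    have hs₀le : s₀ ≤ R ^ 2 := min_le_right _ _
    set r : ℝ := Real.sqrt (R ^ 2 - s₀) with hrdef
    have hr2 : r ^ 2 = R ^ 2 - s₀ := Real.sq_sqrt (by linarith)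
    -- the tail estimate : W w ≤ W 0 whenever s₀ is exceeded
    have htail : ∀ w : ℂ, Complex.normSq w < R ^ 2 → R ^ 2 - Complex.normSq w ≤ s₀ →
        W w ≤ W 0 := by
      intro w hw hsw
      have hswpos : 0 < R ^ 2 - Complex.normSq w := by linarith
      have hlog : Real.log (R ^ 2 - Complex.normSq w) ≤ (v 0 - C + 2 * Real.log (R ^ 2)) / 2 := by
        calc Real.log (R ^ 2 - Complex.normSq w) ≤ Real.log s₁ := by
              rw [Real.log_le_log_iff hswpos hs₁pos]
              exact le_trans hsw (min_le_left _ _)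
          _ = (v 0 - C + 2 * Real.log (R ^ 2)) / 2 := Real.log_exp _
      have hvw : v w ≤ C := hC w hw
      have hW0 : W 0 = v 0 + 2 * Real.log (R ^ 2) + K := by
        simp [hWdef, hvdef]
        ring
      have hWw : W w = v w + 2 * Real.log (R ^ 2 - Complex.normSq w) + K := by
        simp [hWdef, hvdef]
        ring
      rw [hW0, hWw]
      clear_value W v C K s₁ s₀
      linarith
    -- maximising W on the closed ball of radius r
    have hWcont : ContinuousOn W (Metric.closedBall (0:ℂ) r) := by
      apply ContinuousOn.add
      · exact hvcont.continuousOn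
      · apply ContinuousOn.add _ continuousOn_const
        apply ContinuousOn.mul continuousOn_const
        intro w hw
        have hwr : Complex.normSq w ≤ r ^ 2 := by
          rw [Metric.mem_closedBall, dist_zero_right] at hw
          nlinarith [Complex.normSq_eq_norm_sq w, norm_nonneg w]
        have : 0 < R ^ 2 - Complex.normSq w := by
          have := hr2; nlinarith
        have h1 : ContinuousAt (fun y : ℂ => R ^ 2 - Complex.normSq y) w :=
          (continuous_const.sub Complex.continuous_normSq).continuousAt
        have h2 : ContinuousAt Real.log (R ^ 2 - Complex.normSq w) :=
          Real.continuousAt_log this.ne'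
        have key := ContinuousAt.comp (f := fun y : ℂ => R ^ 2 - Complex.normSq y)
          (x := w) h2 h1
        exact key.continuousWithinAt
    have hrnonneg : 0 ≤ r := Real.sqrt_nonneg _
    obtain ⟨p, hpmem, hpmax⟩ := (isCompact_closedBall (0:ℂ) r).exists_isMaxOn
      ⟨0, Metric.mem_closedBall_self hrnonneg⟩ hWcont
    have hpball : Complex.normSq p < R ^ 2 := by
      rw [Metric.mem_closedBall, dist_zero_right] at hpmem
      nlinarith [Complex.normSq_eq_norm_sq p, norm_nonneg p, hs₀pos, hr2]
    -- p is a global max on the open R-ball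
    have hglobal : ∀ w : ℂ, Complex.normSq w < R ^ 2 → W w ≤ W p := by
      intro w hw
      by_cases hcase : Complex.normSq w ≤ r ^ 2
      · apply hpmax
        rw [Metric.mem_closedBall, dist_zero_right]
        nlinarith [Complex.normSq_eq_norm_sq w, norm_nonneg w, hrnonneg]
      · push_neg at hcase
        have h1 : R ^ 2 - Complex.normSq w ≤ s₀ := by
          have := hr2
          linarith
        have h2 : W w ≤ W 0 := htail w hw h1
        have h3 : W 0 ≤ W p := hpmax (Metric.mem_closedBall_self hrnonneg)
        linarith
    have hlocmax : IsLocalMax W p := by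
      have hopen : IsOpen {w : ℂ | Complex.normSq w < R ^ 2} :=
        isOpen_lt Complex.continuous_normSq continuous_const
      exact Filter.eventually_of_mem (hopen.mem_nhds hpball) hglobal
    -- apply the maximum principle
    have hLap := (hW_lap p hpball).nonpos_of_isLocalMax hlocmax
    set sp : ℝ := R ^ 2 - Complex.normSq p with hspdef
    have hsppos : 0 < sp := by simp [hspdef]; linarith
    set A : ℝ := Complex.normSq (h p) * Real.exp (2 * ta p) with hAdef
    clear_value sp A
    have hApos : 0 < A := by
      rw [hAdef]
      exact mul_pos (Complex.normSq_pos.mpr (hne p)) (Real.exp_pos _)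
    have hspne : R ^ 2 - Complex.normSq p ≠ 0 := by
      have := hsppos
      rw [hspdef] at this
      exact this.ne'
    have hineq : 32 * A ≤ 8 * R ^ 2 / sp ^ 2 := by
      have h8 : 8 / sp + 8 * Complex.normSq p / sp ^ 2 = 8 * R ^ 2 / sp ^ 2 := by
        rw [hspdef]
        field_simp [hspne]
        ring
      have h32 : 32 * A ≤ 8 / sp + 8 * Complex.normSq p / sp ^ 2 := by
        rw [hAdef]
        simp only [div_eq_mul_inv] at hLap ⊢
        linarith
      linarith
    -- conclude W p ≤ 0
    set B : ℝ := 4 * A * sp ^ 2 / R ^ 2 with hBdef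
    have hBpos : 0 < B := by positivity
    have hB1 : B ≤ 1 := by
      rw [hBdef]
      rw [div_le_one hR2]
      have hsp2 : 0 < sp ^ 2 := by positivity
      rw [le_div_iff₀ hsp2] at hineq
      nlinarith
    have hWp : W p = Real.log B := by
      have hlogB : Real.log B = Real.log 4 + Real.log A + 2 * Real.log sp - Real.log (R ^ 2) := by
        rw [hBdef, Real.log_div (by positivity) hR2.ne', Real.log_mul (by positivity) (by positivity),
          Real.log_mul (by norm_num) hApos.ne', Real.log_pow]
        push_cast
        ring
      have hlogA : Real.log A = Real.log (Complex.normSq (h p)) + 2 * ta p := by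
        rw [hAdef, Real.log_mul (Complex.normSq_pos.mpr (hne p)).ne' (Real.exp_pos _).ne',
          Real.log_exp]
      rw [hlogB, hlogA]
      simp [hWdef, hKdef, hnsq_eq, hspdef]
      ring
    have hWp0 : W p ≤ 0 := by
      rw [hWp]
      exact Real.log_nonpos hBpos.le hB1
    have hW00 : W 0 = v 0 + Real.log (R ^ 2) + Real.log 4 := by
      simp [hWdef, hvdef, hKdef]
      ring
    have := hglobal 0 (by simpa using hR2)
    rw [hW00] at this
    linarith
  -- choose R large
  set X : ℝ := v 0 with hXdef
  set T : ℝ := 1 + |X| with hTdef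
  have hT : 0 < T := by positivity
  have hfin := key (Real.exp T) (Real.exp_pos T)
  have hlogR : Real.log (Real.exp T ^ 2) = 2 * T := by
    rw [Real.log_pow, Real.log_exp]
    push_cast; ring
  rw [hlogR] at hfin
  have hlog4 : (0:ℝ) ≤ Real.log 4 := Real.log_nonneg (by norm_num)
  have habs : -X ≤ |X| := neg_le_abs X
  have hXabs : 0 ≤ X + |X| := by
    rcases abs_cases X with ⟨h1, h2⟩ | ⟨h1, h2⟩ <;> linarith
  have habs0 : 0 ≤ |X| := abs_nonneg X
  linarith [hfin, hXabs, hlog4, habs0]
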